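/- Suppose V: ℝⁿ → ℝ≥0 satisfies c₁|x|² ≤ V(x) ≤ c₂|x|² with c₁, c₂ > 0, along flows dV/dt ≤ −c₄ V (c₄ > 0), and at each jump E[V(x⁺) | x] ≤ c₅ V(x) with c₅ > 0. Then for a sample path that flows for total continuous time t and undergoes j jumps, E[V(x(t,j))] ≤ c₅^j e^{−c₄ t} V(x(0,0)), and hence E[|x(t,j)|²] ≤ (c₂/c₁) c₅^j e^{−c₄ t} |x(0,0)|². If additionally c₅ < 1, then E[|x(t,j)|²] ≤ (c₂/c₁) e^{−min(c₄, −ln c₅)(t+j)} |x(0,0)|². -/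
import Mathlib


open MeasureTheory Real Finset

/-- Lyapunov–Foster supermartingale argument: if `V_k ≥ 0` is adapted,
`E[V_{k+1} | ℱ_k] ≤ ρ_k V_k` where `ρ_k = c₅` at jump steps (`k ∈ J`) and
`ρ_k = e^{−c₄ Δt_k}` at flow steps, then
`E[V_N] ≤ c₅^j e^{−c₄ t} E[V_0]` where `j` is the number of jumps and `t` the
total flow time among the first `N` steps; combined with the quadratic sandwich
`c₁‖x‖² ≤ V ≤ c₂‖x‖²` this yields `E[‖X_N‖²] ≤ (c₂/c₁) c₅^j e^{−c₄ t} E[‖X_0‖²]`,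
and if `c₅ < 1` also `E[‖X_N‖²] ≤ (c₂/c₁) e^{−min(c₄, −ln c₅)(t+j)} E[‖X_0‖²]`. -/
theorem lyapunov_foster_decay
    {Ω : Type*} {m0 : MeasurableSpace Ω} {μ : Measure Ω} [IsProbabilityMeasure μ]
    {n : ℕ} (ℱ : Filtration ℕ m0)
    (V : ℕ → Ω → ℝ) (X : ℕ → Ω → EuclideanSpace ℝ (Fin n))
    (c₁ c₂ c₄ c₅ : ℝ) (hc₁ : 0 < c₁) (hc₂ : 0 < c₂) (hc₄ : 0 < c₄) (hc₅ : 0 < c₅)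
    (Δt : ℕ → ℝ) (hΔt : ∀ k, 0 ≤ Δt k) (J : Finset ℕ)
    (ρ : ℕ → ℝ) (hρ : ∀ k, ρ k = if k ∈ J then c₅ else Real.exp (-c₄ * Δt k))
    (hadapted : Adapted ℱ V)
    (hint : ∀ k, Integrable (V k) μ)
    (hVpos : ∀ k ω, 0 ≤ V k ω)
    (hXmeas : ∀ k, Measurable (X k))
    (hsandwich : ∀ k ω, c₁ * ‖X k ω‖^2 ≤ V k ω ∧ V k ω ≤ c₂ * ‖X k ω‖^2)
    (hcond : ∀ k, μ[V (k+1) | ℱ k] ≤ᵐ[μ] fun ω => ρ k * V k ω) :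
    ∀ N : ℕ,
      (∫ ω, V N ω ∂μ)
        ≤ c₅ ^ ((Finset.range N).filter (· ∈ J)).card
          * Real.exp (-c₄ * ∑ k ∈ (Finset.range N).filter (· ∉ J), Δt k)
          * ∫ ω, V 0 ω ∂μ ∧
      (∫ ω, ‖X N ω‖^2 ∂μ)
        ≤ (c₂/c₁) * c₅ ^ ((Finset.range N).filter (· ∈ J)).card
          * Real.exp (-c₄ * ∑ k ∈ (Finset.range N).filter (· ∉ J), Δt k)
          * ∫ ω, ‖X 0 ω‖^2 ∂μ ∧
      (c₅ < 1 →
        (∫ ω, ‖X N ω‖^2 ∂μ)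
          ≤ (c₂/c₁)
            * Real.exp (-(min c₄ (-Real.log c₅))
                * ((∑ k ∈ (Finset.range N).filter (· ∉ J), Δt k)
                  + ((Finset.range N).filter (· ∈ J)).card))
            * ∫ ω, ‖X 0 ω‖^2 ∂μ) := by
  intro N
  have hρpos : ∀ k, 0 < ρ k := fun k => by
    rw [hρ k]; split
    · exact hc₅
    · exact Real.exp_pos _
  have hstep : ∀ k, ∫ ω, V (k+1) ω ∂μ ≤ ρ k * ∫ ω, V k ω ∂μ := by
    intro k
    have h1 : ∫ ω, V (k+1) ω ∂μ = ∫ ω, (μ[V (k+1) | ℱ k]) ω ∂μ :=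
      (integral_condExp (ℱ.le k)).symm
    rw [h1]
    calc ∫ ω, (μ[V (k+1) | ℱ k]) ω ∂μ ≤ ∫ ω, ρ k * V k ω ∂μ :=
          integral_mono_ae integrable_condExp ((hint k).const_mul _) (hcond k)
      _ = ρ k * ∫ ω, V k ω ∂μ := integral_const_mul _ _
  have hV0 : 0 ≤ ∫ ω, V 0 ω ∂μ := integral_nonneg (hVpos 0)
  have hmain : ∀ M, ∫ ω, V M ω ∂μ ≤ (∏ k ∈ Finset.range M, ρ k) * ∫ ω, V 0 ω ∂μ := by
    intro M
    induction M with
    | zero => simp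
    | succ m ih =>
      calc ∫ ω, V (m+1) ω ∂μ ≤ ρ m * ∫ ω, V m ω ∂μ := hstep m
        _ ≤ ρ m * ((∏ k ∈ Finset.range m, ρ k) * ∫ ω, V 0 ω ∂μ) :=
            mul_le_mul_of_nonneg_left ih (hρpos m).le
        _ = (∏ k ∈ Finset.range (m+1), ρ k) * ∫ ω, V 0 ω ∂μ := by
            rw [Finset.prod_range_succ]; ring
  have hXint : ∀ k, Integrable (fun ω => ‖X k ω‖^2) μ := by
    intro k
    have hm : AEStronglyMeasurable (fun ω => ‖X k ω‖^2) μ :=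
      (((hXmeas k).norm.pow_const 2)).aestronglyMeasurable
    refine Integrable.mono' ((hint k).const_mul c₁⁻¹) hm ?_
    filter_upwards with ω
    rw [Real.norm_eq_abs, abs_of_nonneg (by positivity)]
    have h := (hsandwich k ω).1
    calc ‖X k ω‖^2 = c₁⁻¹ * (c₁ * ‖X k ω‖^2) := by field_simp
      _ ≤ c₁⁻¹ * V k ω := mul_le_mul_of_nonneg_left h (by positivity)
  have hA : c₁ * ∫ ω, ‖X N ω‖^2 ∂μ ≤ ∫ ω, V N ω ∂μ := by
    rw [← integral_const_mul]
    exact integral_mono ((hXint N).const_mul c₁) (hint N) (fun ω => (hsandwich N ω).1)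
  have hB : ∫ ω, V 0 ω ∂μ ≤ c₂ * ∫ ω, ‖X 0 ω‖^2 ∂μ := by
    rw [← integral_const_mul]
    exact integral_mono (hint 0) ((hXint 0).const_mul c₂) (fun ω => (hsandwich 0 ω).2)
  have hX0 : 0 ≤ ∫ ω, ‖X 0 ω‖^2 ∂μ := integral_nonneg (fun ω => by positivity)
  have htpos : 0 ≤ ∑ k ∈ (Finset.range N).filter (· ∉ J), Δt k :=
    Finset.sum_nonneg (fun k _ => hΔt k)
  generalize hjdef : ((Finset.range N).filter (· ∈ J)).card = j
  generalize htdef : (∑ k ∈ (Finset.range N).filter (· ∉ J), Δt k) = t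
  rw [htdef] at htpos
  have hprod : (∏ k ∈ Finset.range N, ρ k) = c₅ ^ j * Real.exp (-c₄ * t) := by
    rw [← hjdef, ← htdef,
      ← Finset.prod_filter_mul_prod_filter_not (Finset.range N) (· ∈ J) ρ]
    congr 1
    · rw [Finset.prod_congr rfl fun k hk => by
        rw [hρ k, if_pos (Finset.mem_filter.mp hk).2], Finset.prod_const]
    · rw [Finset.prod_congr rfl fun k hk => by
        rw [hρ k, if_neg (Finset.mem_filter.mp hk).2], ← Real.exp_sum, ← Finset.mul_sum]
  have hVN : ∫ ω, V N ω ∂μ ≤ c₅ ^ j * Real.exp (-c₄ * t) * ∫ ω, V 0 ω ∂μ :=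
    hprod ▸ hmain N
  have hP : (0:ℝ) ≤ c₅ ^ j * Real.exp (-c₄ * t) := by positivity
  have hXN : ∫ ω, ‖X N ω‖^2 ∂μ
      ≤ (c₂/c₁) * c₅ ^ j * Real.exp (-c₄ * t) * ∫ ω, ‖X 0 ω‖^2 ∂μ := by
    have hkey : c₁ * ∫ ω, ‖X N ω‖^2 ∂μ
        ≤ c₁ * ((c₂/c₁) * c₅ ^ j * Real.exp (-c₄ * t) * ∫ ω, ‖X 0 ω‖^2 ∂μ) := by
      calc c₁ * ∫ ω, ‖X N ω‖^2 ∂μ ≤ ∫ ω, V N ω ∂μ := hA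
        _ ≤ c₅ ^ j * Real.exp (-c₄ * t) * ∫ ω, V 0 ω ∂μ := hVN
        _ ≤ c₅ ^ j * Real.exp (-c₄ * t) * (c₂ * ∫ ω, ‖X 0 ω‖^2 ∂μ) :=
            mul_le_mul_of_nonneg_left hB hP
        _ = c₁ * ((c₂/c₁) * c₅ ^ j * Real.exp (-c₄ * t) * ∫ ω, ‖X 0 ω‖^2 ∂μ) := by
            field_simp
    exact le_of_mul_le_mul_left hkey hc₁
  refine ⟨hVN, hXN, fun hc₅1 => ?_⟩
  set m := min c₄ (-Real.log c₅) with hm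
  have hlog : Real.log c₅ < 0 := Real.log_neg hc₅ hc₅1
  have hmpos : 0 < m := lt_min hc₄ (by linarith)
  have hPm : c₅ ^ j * Real.exp (-c₄ * t) ≤ Real.exp (-m * (t + j)) := by
    have h1 : c₅ ^ j ≤ Real.exp (-m * j) := by
      rw [← Real.exp_log hc₅, ← Real.exp_nat_mul]
      apply Real.exp_le_exp.mpr
      have hmle : m ≤ -Real.log c₅ := min_le_right _ _
      have hjn : (0:ℝ) ≤ (j:ℝ) := Nat.cast_nonneg j
      nlinarith
    have h2 : Real.exp (-c₄ * t) ≤ Real.exp (-m * t) := by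
      apply Real.exp_le_exp.mpr
      have hmle : m ≤ c₄ := min_le_left _ _
      nlinarith
    calc c₅ ^ j * Real.exp (-c₄ * t) ≤ Real.exp (-m * j) * Real.exp (-m * t) :=
          mul_le_mul h1 h2 (Real.exp_pos _).le (by positivity)
      _ = Real.exp (-m * (t + j)) := by rw [← Real.exp_add]; ring_nf
  calc ∫ ω, ‖X N ω‖^2 ∂μ
      ≤ (c₂/c₁) * c₅ ^ j * Real.exp (-c₄ * t) * ∫ ω, ‖X 0 ω‖^2 ∂μ := hXN
    _ ≤ (c₂/c₁) * Real.exp (-m * (t + j)) * ∫ ω, ‖X 0 ω‖^2 ∂μ := by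
        apply mul_le_mul_of_nonneg_right _ hX0
        calc (c₂/c₁) * c₅ ^ j * Real.exp (-c₄ * t)
            = (c₂/c₁) * (c₅ ^ j * Real.exp (-c₄ * t)) := by ring
          _ ≤ (c₂/c₁) * Real.exp (-m * (t + j)) :=
              mul_le_mul_of_nonneg_left hPm (by positivity)
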